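/- arXiv:2008.07773 — 5 statements merged into one kernel-verified Lean document; each statement's English description precedes it below -/
import Mathlib

section
/- Let D ≥ 1 and let w ∈ ℝ^D be a weight vector with strictly decreasing positive components w₁ > w₂ > … > w_D > 0. The generalized Gini social welfare function is monotone with respect to Pareto dominance: if u, v ∈ ℝ^D satisfy u_i ≥ v_i for all i, then GGF_w(u) ≥ GGF_w(v); moreover, if in addition u_j > v_j for some j, then GGF_w(u) > GGF_w(v). -/
/-!
By the rearrangement inequality, pairing the decreasing weights with the increasingly sorted
components minimizes the weighted sum, so `GGF w v` is at most the weighted sum of `v` taken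
along the permutation that sorts `u`. Termwise that sum is dominated by the same sum for `u`,
which is `GGF w u`, strictly as soon as one component of `u` exceeds that of `v`.
-/

open Finset

/-- Generalized Gini social welfare function: weighted sum of the components of `v`
sorted in increasing order. -/
noncomputable def GGF {D : ℕ} (w v : Fin D → ℝ) : ℝ :=
  ∑ i, w i * v (Tuple.sort v i)

lemma antivary_comp_sort {D : ℕ} {w : Fin D → ℝ} (hw : Antitone w) (v : Fin D → ℝ) :
    Antivary w (v ∘ Tuple.sort v) := fun _ _ hlt =>
  hw ((Tuple.monotone_sort v).reflect_lt hlt).le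

lemma GGF_le_sum_mul_comp_perm {D : ℕ} {w : Fin D → ℝ} (hw : Antitone w) (v : Fin D → ℝ)
    (σ : Equiv.Perm (Fin D)) : GGF w v ≤ ∑ i, w i * v (σ i) := by
  simpa [GGF, Function.comp] using
    (antivary_comp_sort hw v).sum_mul_le_sum_mul_comp_perm (σ := σ.trans (Tuple.sort v)⁻¹)

lemma sum_mul_lt_sum_mul_of_le_of_lt {ι : Type*} [Fintype ι] {w u v : ι → ℝ}
    (hwpos : ∀ i, 0 < w i) (hdom : ∀ i, v i ≤ u i) {j : ι} (hj : v j < u j) :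
    ∑ i, w i * v i < ∑ i, w i * u i :=
  sum_lt_sum (fun i _ => mul_le_mul_of_nonneg_left (hdom i) (hwpos i).le)
    ⟨j, mem_univ j, mul_lt_mul_of_pos_left hj (hwpos j)⟩

theorem ggf_pareto_monotone_general {D : ℕ} (w : Fin D → ℝ)
    (hw : StrictAnti w) (hwpos : ∀ i, 0 < w i)
    (u v : Fin D → ℝ) (hdom : ∀ i, v i ≤ u i) :
    GGF w v ≤ GGF w u ∧ ((∃ j, v j < u j) → GGF w v < GGF w u) := by
  have hle : GGF w v ≤ ∑ i, w i * v (Tuple.sort u i) :=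
    GGF_le_sum_mul_comp_perm hw.antitone v _
  constructor
  · exact hle.trans (sum_le_sum fun i _ => mul_le_mul_of_nonneg_left (hdom _) (hwpos i).le)
  · rintro ⟨j, hj⟩
    have hj' : v (Tuple.sort u ((Tuple.sort u)⁻¹ j)) < u (Tuple.sort u ((Tuple.sort u)⁻¹ j)) := by
      simpa using hj
    exact hle.trans_lt (sum_mul_lt_sum_mul_of_le_of_lt hwpos (fun _ => hdom _) hj')

/-- for strictly decreasing positive weights, GGF is monotone with respect to
(weak and strict) Pareto dominance. -/
theorem ggf_pareto_monotone {D : ℕ} (hD : 1 ≤ D) (w : Fin D → ℝ)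
    (hw : StrictAnti w) (hwpos : ∀ i, 0 < w i)
    (u v : Fin D → ℝ) (hdom : ∀ i, v i ≤ u i) :
    GGF w v ≤ GGF w u ∧ ((∃ j, v j < u j) → GGF w v < GGF w u) :=
  ggf_pareto_monotone_general w hw hwpos u v hdom
end

section
/- Let D ≥ 1 and let w ∈ ℝ^D be a weight vector with strictly decreasing positive components w₁ > w₂ > … > w_D > 0. Then the generalized Gini social welfare function satisfies the Pigou–Dalton transfer principle: for every v ∈ ℝ^D and indices i, j with v_i > v_j, and for every ε with 0 < ε < v_i − v_j, one has GGF_w(v − ε·e_i + ε·e_j) > GGF_w(v), where e_k denotes the k-th canonical basis vector of ℝ^D. -/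
open Finset

/-!
Let `τ` be the ranking of the components of the transferred vector `v'`, so that
`GGF w v' = ∑ₘ w (τ m) * v' m`. Measured against `v`, this sum gains `ε (w (τ j) - w (τ i))`;
measured against `v` with components `i`, `j` swapped, it gains `(vᵢ - vⱼ - ε)(w (τ i) - w (τ j))`.
Since `w` is injective one of the two gains is positive, and by the rearrangement inequality
both reference sums are at least `GGF w v`.
-/

section Transfer

variable {ι : Type*} [DecidableEq ι]

def transfer (v : ι → ℝ) (i j : ι) (ε : ℝ) : ι → ℝ :=
  fun k => v k - (if k = i then ε else 0) + (if k = j then ε else 0)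

theorem sum_mul_transfer [Fintype ι] (a v : ι → ℝ) (i j : ι) (ε : ℝ) :
    ∑ k, a k * transfer v i j ε k = ∑ k, a k * v k + ε * (a j - a i) := by
  simp only [transfer, mul_add, mul_sub, sum_add_distrib, sum_sub_distrib, mul_ite, mul_zero,
    sum_ite_eq', mem_univ, if_true]
  ring

theorem transfer_eq_transfer_comp_swap (v : ι → ℝ) {i j : ι} (hij : i ≠ j) (ε : ℝ) :
    transfer v i j ε = transfer (v ∘ Equiv.swap i j) j i (v i - v j - ε) := by
  ext k
  rcases eq_or_ne k i with rfl | hki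
  · simp [transfer, hij]; ring
  rcases eq_or_ne k j with rfl | hkj
  · simp [transfer, hki]; ring
  simp [transfer, hki, hkj, Equiv.swap_apply_of_ne_of_ne hki hkj]

end Transfer

section GGF

variable {D : ℕ}

theorem GGF_eq_sum_sort_symm (w v : Fin D → ℝ) :
    GGF w v = ∑ m, w ((Tuple.sort v).symm m) * v m := by
  rw [GGF, ← Equiv.sum_comp (Tuple.sort v) fun m => w ((Tuple.sort v).symm m) * v m]
  simp

theorem GGF_le_sum_mul {w : Fin D → ℝ} (hw : Antitone w) (v : Fin D → ℝ)
    (τ : Equiv.Perm (Fin D)) : GGF w v ≤ ∑ m, w (τ m) * v m := by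
  have hanti : Antivary w (v ∘ Tuple.sort v) := hw.antivary (Tuple.monotone_sort v)
  calc GGF w v ≤ ∑ k, w (τ (Tuple.sort v k)) * v (Tuple.sort v k) :=
        hanti.sum_mul_le_sum_comp_perm_mul (σ := (Tuple.sort v).trans τ)
    _ = ∑ m, w (τ m) * v m := Equiv.sum_comp (Tuple.sort v) fun m => w (τ m) * v m

theorem GGF_lt_GGF_transfer {w : Fin D → ℝ} (hw : StrictAnti w) (v : Fin D → ℝ) {i j : Fin D}
    (hij : v j < v i) {ε : ℝ} (hε0 : 0 < ε) (hεlt : ε < v i - v j) :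
    GGF w v < GGF w (transfer v i j ε) := by
  have hne : i ≠ j := fun h => hij.ne (h ▸ rfl)
  set a : Fin D → ℝ := fun m => w ((Tuple.sort (transfer v i j ε)).symm m)
  have hGGF : GGF w (transfer v i j ε) = ∑ m, a m * transfer v i j ε m :=
    GGF_eq_sum_sort_symm w _
  have hswap : ∑ m, a m * (v ∘ Equiv.swap i j) m
      = ∑ m, w (((Equiv.swap i j).trans (Tuple.sort (transfer v i j ε)).symm) m) * v m := by
    rw [← Equiv.sum_comp (Equiv.swap i j)]; simp [a]
  rcases lt_or_gt_of_ne (hw.injective.ne ((Tuple.sort (transfer v i j ε)).symm.injective.ne hne))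
    with h | h
  · have hgain : 0 < ε * (a j - a i) := mul_pos hε0 (sub_pos.mpr h)
    calc GGF w v ≤ ∑ m, a m * v m := GGF_le_sum_mul hw.antitone v _
      _ < GGF w (transfer v i j ε) := by rw [hGGF, sum_mul_transfer]; linarith
  · have hgain : 0 < (v i - v j - ε) * (a i - a j) := mul_pos (by linarith) (sub_pos.mpr h)
    calc GGF w v ≤ ∑ m, a m * (v ∘ Equiv.swap i j) m := hswap ▸ GGF_le_sum_mul hw.antitone v _
      _ < GGF w (transfer v i j ε) := by
        rw [hGGF, transfer_eq_transfer_comp_swap v hne, sum_mul_transfer]; linarith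

end GGF

theorem ggf_pigou_dalton_general {D : ℕ} (w : Fin D → ℝ)
    (hw : StrictAnti w)
    (v : Fin D → ℝ) (i j : Fin D) (hij : v j < v i)
    (ε : ℝ) (hε0 : 0 < ε) (hεlt : ε < v i - v j) :
    GGF w v < GGF w (fun k => v k - (if k = i then ε else 0) + (if k = j then ε else 0)) :=
  GGF_lt_GGF_transfer hw v hij hε0 hεlt

/-- for strictly decreasing positive weights, GGF satisfies the
Pigou–Dalton transfer principle: transferring ε from a better-off component i to a
worse-off component j (with 0 < ε < v i - v j) strictly increases the welfare. -/
theorem ggf_pigou_dalton {D : ℕ} (hD : 1 ≤ D) (w : Fin D → ℝ)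
    (hw : StrictAnti w) (hwpos : ∀ i, 0 < w i)
    (v : Fin D → ℝ) (i j : Fin D) (hij : v j < v i)
    (ε : ℝ) (hε0 : 0 < ε) (hεlt : ε < v i - v j) :
    GGF w v < GGF w (fun k => v k - (if k = i then ε else 0) + (if k = j then ε else 0)) :=
  ggf_pigou_dalton_general w hw v i j hij ε hε0 hεlt
end

section
/- Let D ≥ 1 and let w ∈ ℝ^D be a weight vector with strictly decreasing positive components w₁ > w₂ > … > w_D > 0. Let v ∈ ℝ^D have pairwise distinct components and let σ be the (unique) permutation of {1,…,D} such that v_{σ⁻¹(1)} < v_{σ⁻¹(2)} < … < v_{σ⁻¹(D)} (i.e., w_σ assigns the largest weight to the smallest component of v). Then GGF_w is linear in a neighborhood of v: there exists δ > 0 such that for all v' ∈ ℝ^D with ‖v' − v‖ < δ, GGF_w(v') = ∑_{i=1}^D w_{σ(i)} v'_i. In particular GGF_w is differentiable at v with gradient w_σ. -/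
open Finset

lemma ggf_eq_of_strictMono {D : ℕ} (w : Fin D → ℝ) (u : Fin D → ℝ)
    (σ : Equiv.Perm (Fin D)) (h : StrictMono (fun i => u (σ.symm i))) :
    GGF w u = ∑ i, w (σ i) * u i := by
  have hsort : σ.symm = Tuple.sort u := by
    rw [Tuple.eq_sort_iff]
    refine ⟨h.monotone, fun i j hij heq => ?_⟩
    exact absurd heq (h hij).ne
  rw [GGF, ← hsort]
  exact Fintype.sum_equiv σ.symm _ _ (fun j => by rw [Equiv.apply_symm_apply])

lemma strictMono_open {D : ℕ} (v : Fin D → ℝ) (σ : Equiv.Perm (Fin D))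
    (hσ : StrictMono (fun i => v (σ.symm i))) :
    ∃ δ > (0:ℝ), ∀ u : Fin D → ℝ, ‖u - v‖ < δ → StrictMono (fun i => u (σ.symm i)) := by
  have hopen : IsOpen {u : Fin D → ℝ | ∀ i j : Fin D, i < j → u (σ.symm i) < u (σ.symm j)} := by
    have : {u : Fin D → ℝ | ∀ i j : Fin D, i < j → u (σ.symm i) < u (σ.symm j)} =
        ⋂ i : Fin D, ⋂ j : Fin D, ⋂ _ : i < j, {u | u (σ.symm i) < u (σ.symm j)} := by
      ext u; simp [Set.mem_iInter]
    rw [this]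
    refine isOpen_iInter_of_finite fun i => isOpen_iInter_of_finite fun j =>
      isOpen_iInter_of_finite fun _ => ?_
    exact isOpen_lt (continuous_apply _) (continuous_apply _)
  have hmem : v ∈ {u : Fin D → ℝ | ∀ i j : Fin D, i < j → u (σ.symm i) < u (σ.symm j)} :=
    fun i j hij => hσ hij
  obtain ⟨δ, hδ, hball⟩ := Metric.isOpen_iff.1 hopen v hmem
  refine ⟨δ, hδ, fun u hu => ?_⟩
  have : u ∈ Metric.ball v δ := by
    rw [Metric.mem_ball, dist_eq_norm]; exact hu
  intro i j hij
  exact hball this i j hij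

/-- if `v` has pairwise distinct components and `σ` is the permutation
such that `i ↦ v (σ⁻¹ i)` is strictly increasing (so that `w_σ` assigns the largest
weight to the smallest component of `v`), then GGF is linear in a neighborhood of `v`
(equal to `v' ↦ ∑ i, w (σ i) * v' i`), and in particular differentiable at `v` with
gradient `w_σ`. -/
theorem ggf_locally_linear {D : ℕ} (hD : 1 ≤ D) (w : Fin D → ℝ)
    (hw : StrictAnti w) (hwpos : ∀ i, 0 < w i)
    (v : Fin D → ℝ) (hv : Function.Injective v)
    (σ : Equiv.Perm (Fin D)) (hσ : StrictMono (fun i => v (σ.symm i))) :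
    (∃ δ > (0:ℝ), ∀ v' : Fin D → ℝ, ‖v' - v‖ < δ →
        GGF w v' = ∑ i, w (σ i) * v' i) ∧
    HasFDerivAt (GGF w)
      (∑ i : Fin D, w (σ i) • (ContinuousLinearMap.proj i : (Fin D → ℝ) →L[ℝ] ℝ)) v := by
  obtain ⟨δ, hδ, hball⟩ := strictMono_open v σ hσ
  have hloc : ∀ v' : Fin D → ℝ, ‖v' - v‖ < δ → GGF w v' = ∑ i, w (σ i) * v' i :=
    fun v' hv' => ggf_eq_of_strictMono w v' σ (hball v' hv')
  refine ⟨⟨δ, hδ, hloc⟩, ?_⟩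
  set L : (Fin D → ℝ) →L[ℝ] ℝ :=
    ∑ i : Fin D, w (σ i) • (ContinuousLinearMap.proj i : (Fin D → ℝ) →L[ℝ] ℝ) with hL
  have hLapp : ∀ u : Fin D → ℝ, L u = ∑ i, w (σ i) * u i := by
    intro u
    simp [hL, ContinuousLinearMap.sum_apply]
  have hEq : GGF w =ᶠ[nhds v] fun u => L u := by
    filter_upwards [Metric.ball_mem_nhds v hδ] with u hu
    rw [hLapp]
    exact hloc u (by rwa [Metric.mem_ball, dist_eq_norm] at hu)
  have : HasFDerivAt (fun u => L u) L v := L.hasFDerivAt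
  exact this.congr_of_eventuallyEq hEq
end

section
/- Let P be an n×n real row-stochastic matrix (all entries nonnegative and every row sums to 1). Then the Cesàro averages (1/m) ∑_{k=0}^{m−1} P^k converge as m → ∞ to a matrix P*, which is itself row-stochastic. -/
open Finset Filter Topology

/-- A square real matrix is row-stochastic if all entries are nonnegative and
every row sums to 1. -/
def RowStochastic {n : ℕ} (P : Matrix (Fin n) (Fin n) ℝ) : Prop :=
  (∀ i j, 0 ≤ P i j) ∧ ∀ i, ∑ j, P i j = 1

/-!
Row-stochastic matrices form a compact convex monoid containing every power of `P`, so the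
Cesàro means `A m` stay in it. Since `A m * P - A m = P * A m - A m = (P ^ m - 1) / m → 0`,
every cluster point `L` of `(A m)` satisfies `L * P = L = P * L`, hence `L * A m = L = A m * L`.
For cluster points `L, L'`, passing to the limit in `L' * A m` and `A m * L` gives
`L' * L = L'` and `L' * L = L`; so the cluster point is unique and, by compactness, the whole
sequence converges to it.
-/

theorem MapClusterPt.apply_eq_of_tendsto {ι X Y : Type*} [TopologicalSpace X]
    [TopologicalSpace Y] [T2Space Y] {F : Filter ι} {u : ι → X} {x : X} {f : X → Y} {y : Y}
    (hx : MapClusterPt x F u) (hf : ContinuousAt f x) (hfu : Tendsto (f ∘ u) F (𝓝 y)) :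
    f x = y :=
  eq_of_nhds_neBot ((hx.continuousAt_comp hf).clusterPt.mono hfu)

section CesaroMean

variable {R : Type*} [Ring R] [Algebra ℝ R]

noncomputable def cesaroMean (P : R) (m : ℕ) : R :=
  (m : ℝ)⁻¹ • ∑ k ∈ range m, P ^ k

theorem cesaroMean_mul_sub_self (P : R) (m : ℕ) :
    cesaroMean P m * P - cesaroMean P m = (m : ℝ)⁻¹ • (P ^ m - 1) := by
  rw [cesaroMean, ← mul_sub_one, smul_mul_assoc, geom_sum_mul]

theorem mul_cesaroMean_sub_self (P : R) (m : ℕ) :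
    P * cesaroMean P m - cesaroMean P m = (m : ℝ)⁻¹ • (P ^ m - 1) := by
  rw [cesaroMean, ← sub_one_mul, mul_smul_comm, mul_geom_sum]

theorem cesaroMean_mem {K : Set R} (hK : Convex ℝ K) {P : R} (hP : ∀ k, P ^ k ∈ K) {m : ℕ}
    (hm : m ≠ 0) : cesaroMean P m ∈ K := by
  rw [cesaroMean, smul_sum]
  exact hK.sum_mem (fun _ _ => by positivity) (by simp [hm]) fun k _ => hP k

theorem mul_cesaroMean_of_mul_eq_self {P L : R} (h : L * P = L) {m : ℕ} (hm : m ≠ 0) :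
    L * cesaroMean P m = L := by
  have hpow : ∀ k, L * P ^ k = L := fun k => by
    induction k with
    | zero => simp
    | succ k ih => rw [pow_succ, ← mul_assoc, ih, h]
  rw [cesaroMean, mul_smul_comm, mul_sum]
  simp only [hpow, sum_const, card_range]
  rw [← Nat.cast_smul_eq_nsmul ℝ, inv_smul_smul₀ (Nat.cast_ne_zero.2 hm)]

theorem cesaroMean_mul_of_mul_eq_self {P L : R} (h : P * L = L) {m : ℕ} (hm : m ≠ 0) :
    cesaroMean P m * L = L := by
  have hpow : ∀ k, P ^ k * L = L := fun k => by
    induction k with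
    | zero => simp
    | succ k ih => rw [pow_succ, mul_assoc, h, ih]
  rw [cesaroMean, smul_mul_assoc, sum_mul]
  simp only [hpow, sum_const, card_range]
  rw [← Nat.cast_smul_eq_nsmul ℝ, inv_smul_smul₀ (Nat.cast_ne_zero.2 hm)]

end CesaroMean

section Topology

variable {R : Type*} [Ring R] [Algebra ℝ R] [TopologicalSpace R] [IsTopologicalRing R]
  [ContinuousSMul ℝ R] {K : Set R} {P : R}

theorem tendsto_inv_smul_pow_sub_one (hK : IsCompact K) (hP : ∀ k, P ^ k ∈ K) :
    Tendsto (fun m : ℕ => (m : ℝ)⁻¹ • (P ^ m - 1)) atTop (𝓝 0) :=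
  ((hK.image (continuous_sub_right 1)).isVonNBounded ℝ).smul_tendsto_zero
    (Eventually.of_forall fun k => Set.mem_image_of_mem _ (hP k))
    (tendsto_inv_atTop_zero.comp tendsto_natCast_atTop_atTop)

variable [T2Space R]

theorem mul_eq_self_of_mapClusterPt_cesaroMean (hK : IsCompact K) (hP : ∀ k, P ^ k ∈ K) {L : R}
    (hL : MapClusterPt L atTop (cesaroMean P)) : L * P = L ∧ P * L = L := by
  have h₀ := tendsto_inv_smul_pow_sub_one hK hP
  constructor
  · refine sub_eq_zero.1 (hL.apply_eq_of_tendsto (f := fun A => A * P - A) (by fun_prop) ?_)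
    simpa only [Function.comp_def, cesaroMean_mul_sub_self] using h₀
  · refine sub_eq_zero.1 (hL.apply_eq_of_tendsto (f := fun A => P * A - A) (by fun_prop) ?_)
    simpa only [Function.comp_def, mul_cesaroMean_sub_self] using h₀

theorem eq_of_mapClusterPt_cesaroMean (hK : IsCompact K) (hP : ∀ k, P ^ k ∈ K) {L L' : R}
    (hL : MapClusterPt L atTop (cesaroMean P)) (hL' : MapClusterPt L' atTop (cesaroMean P)) :
    L = L' := by
  have hPL := (mul_eq_self_of_mapClusterPt_cesaroMean hK hP hL).2
  have hL'P := (mul_eq_self_of_mapClusterPt_cesaroMean hK hP hL').1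
  have h₁ : L' * L = L := hL'.apply_eq_of_tendsto (f := (· * L)) (by fun_prop) <|
    tendsto_const_nhds.congr' <| (eventually_ne_atTop 0).mono fun m hm =>
      (cesaroMean_mul_of_mul_eq_self hPL hm).symm
  have h₂ : L' * L = L' := hL.apply_eq_of_tendsto (f := (L' * ·)) (by fun_prop) <|
    tendsto_const_nhds.congr' <| (eventually_ne_atTop 0).mono fun m hm =>
      (mul_cesaroMean_of_mul_eq_self hL'P hm).symm
  exact h₁.symm.trans h₂

theorem exists_tendsto_cesaroMean (hK : IsCompact K) (hKc : Convex ℝ K) (hP : ∀ k, P ^ k ∈ K) :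
    ∃ L ∈ K, Tendsto (cesaroMean P) atTop (𝓝 L) := by
  have hmem : ∀ᶠ m in atTop, cesaroMean P m ∈ K :=
    (eventually_ne_atTop 0).mono fun m hm => cesaroMean_mem hKc hP hm
  obtain ⟨L, hLK, hL⟩ := hK.exists_mapClusterPt (le_principal_iff.2 hmem)
  exact ⟨L, hLK, hK.tendsto_nhds_of_unique_mapClusterPt hmem fun L' _ hL' =>
    eq_of_mapClusterPt_cesaroMean hK hP hL' hL⟩

end Topology

namespace Matrix

variable {n R : Type*} [Fintype n] [DecidableEq n] [Semiring R] [PartialOrder R]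
  [IsOrderedRing R] [TopologicalSpace R] [IsTopologicalSemiring R] [OrderClosedTopology R]

theorem isClosed_rowStochastic : IsClosed (rowStochastic R n : Set (Matrix n n R)) := by
  have hnonneg : IsClosed {M : Matrix n n R | ∀ i j, 0 ≤ M i j} := by
    simp only [Set.ofPred_forall]
    exact isClosed_iInter fun i => isClosed_iInter fun j =>
      isClosed_le continuous_const (continuous_id.matrix_elem i j)
  exact hnonneg.inter (isClosed_eq (continuous_id.matrix_mulVec continuous_const) continuous_const)

theorem isCompact_rowStochastic [CompactIccSpace R] :
    IsCompact (rowStochastic R n : Set (Matrix n n R)) :=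
  (isCompact_univ_pi fun _ => isCompact_univ_pi fun _ => isCompact_Icc (a := (0 : R)) (b := 1))
    |>.of_isClosed_subset isClosed_rowStochastic fun _ hM _ _ _ _ =>
      ⟨nonneg_of_mem_rowStochastic hM, le_one_of_mem_rowStochastic hM⟩

end Matrix

theorem rowStochastic_iff_mem {n : ℕ} {P : Matrix (Fin n) (Fin n) ℝ} :
    RowStochastic P ↔ P ∈ Matrix.rowStochastic ℝ (Fin n) :=
  Matrix.mem_rowStochastic_iff_sum.symm

/-- for a row-stochastic matrix `P`, the Cesàro averages
`(1/m) ∑_{k<m} P^k` converge to a matrix `P*`, which is itself row-stochastic. -/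
theorem cesaro_limit_exists {n : ℕ} (P : Matrix (Fin n) (Fin n) ℝ)
    (hP : RowStochastic P) :
    ∃ Pstar : Matrix (Fin n) (Fin n) ℝ,
      Tendsto (fun m : ℕ => (m : ℝ)⁻¹ • ∑ k ∈ Finset.range m, P ^ k)
        atTop (𝓝 Pstar) ∧ RowStochastic Pstar := by
  obtain ⟨Pstar, hstoch, hlim⟩ := exists_tendsto_cesaroMean Matrix.isCompact_rowStochastic
    Matrix.convex_rowStochastic (pow_mem (rowStochastic_iff_mem.1 hP))
  exact ⟨Pstar, hlim, rowStochastic_iff_mem.2 hstoch⟩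
end

section
/- Let P be an n×n real row-stochastic matrix and let P* be the Cesàro limit of P^m. Then the matrix I − P + P* is invertible. -/
/-!
Write `A m = (1/m) ∑_{k<m} P^k` and `P* = lim A m`. Since the powers of a row-stochastic
matrix stay bounded, `A m (1 - P) = (1 - P^m)/m → 0`, so `P* P = P*`, whence `P* A m = P*` and
`P*² = P*`. If `(1 - P + P*) X = 0`, multiplying by `P*` gives `P* X = 0`, so `P X = X`, so
`A m X = X` and in the limit `X = P* X = 0`. A matrix that is not a left zero divisor is
invertible.
-/

open Finset Filter Topology

section Monoid

variable {M : Type*} [Monoid M] {P Q : M}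

lemma mul_pow_eq_self_of_mul_eq (h : Q * P = Q) (k : ℕ) : Q * P ^ k = Q := by
  induction k with
  | zero => rw [pow_zero, mul_one]
  | succ k ih => rw [pow_succ, ← mul_assoc, ih, h]

lemma pow_mul_eq_self_of_mul_eq (h : P * Q = Q) (k : ℕ) : P ^ k * Q = Q := by
  induction k with
  | zero => rw [pow_zero, one_mul]
  | succ k ih => rw [pow_succ', mul_assoc, ih, h]

end Monoid

section CesaroMean

variable {R : Type*} [Ring R] [Algebra ℝ R]

lemma cesaroMean_mul_one_sub (P : R) (m : ℕ) :
    cesaroMean P m * (1 - P) = (m : ℝ)⁻¹ • (1 - P ^ m) := by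
  rw [cesaroMean, smul_mul_assoc, geom_sum_mul_neg]

lemma mul_cesaroMean_of_mul_eq {P Q : R} (h : Q * P = Q) {m : ℕ} (hm : m ≠ 0) :
    Q * cesaroMean P m = Q := by
  rw [cesaroMean, mul_smul_comm, mul_sum, sum_congr rfl fun k _ => mul_pow_eq_self_of_mul_eq h k,
    sum_const, card_range, ← Nat.cast_smul_eq_nsmul ℝ, inv_smul_smul₀ (Nat.cast_ne_zero.2 hm)]

lemma cesaroMean_mul_of_mul_eq {P X : R} (h : P * X = X) {m : ℕ} (hm : m ≠ 0) :
    cesaroMean P m * X = X := by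
  rw [cesaroMean, smul_mul_assoc, sum_mul,
    sum_congr rfl fun k _ => pow_mul_eq_self_of_mul_eq h k, sum_const, card_range,
    ← Nat.cast_smul_eq_nsmul ℝ, inv_smul_smul₀ (Nat.cast_ne_zero.2 hm)]

variable [TopologicalSpace R] [IsTopologicalRing R] {P Q : R}

lemma tendsto_cesaroMean_mul_one_sub [ContinuousSMul ℝ R]
    (hP : Tendsto (fun m : ℕ => (m : ℝ)⁻¹ • P ^ m) atTop (𝓝 0)) :
    Tendsto (fun m => cesaroMean P m * (1 - P)) atTop (𝓝 0) := by
  simp_rw [cesaroMean_mul_one_sub, smul_sub]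
  simpa using ((tendsto_inv_atTop_nhds_zero_nat (𝕜 := ℝ)).smul_const (1 : R)).sub hP

variable [T2Space R]

lemma mul_self_eq_of_tendsto_cesaroMean (hQP : Q * P = Q)
    (hQ : Tendsto (cesaroMean P) atTop (𝓝 Q)) : Q * Q = Q :=
  tendsto_nhds_unique (hQ.const_mul Q) <| tendsto_const_nhds.congr' <|
    (eventually_ne_atTop 0).mono fun _ hm => (mul_cesaroMean_of_mul_eq hQP hm).symm

lemma mul_eq_of_tendsto_cesaroMean (hQ : Tendsto (cesaroMean P) atTop (𝓝 Q)) {X : R}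
    (hX : P * X = X) : Q * X = X :=
  tendsto_nhds_unique (hQ.mul_const X) <| tendsto_const_nhds.congr' <|
    (eventually_ne_atTop 0).mono fun _ hm => (cesaroMean_mul_of_mul_eq hX hm).symm

variable [ContinuousSMul ℝ R]

lemma mul_eq_self_of_tendsto_cesaroMean
    (hP : Tendsto (fun m : ℕ => (m : ℝ)⁻¹ • P ^ m) atTop (𝓝 0))
    (hQ : Tendsto (cesaroMean P) atTop (𝓝 Q)) : Q * P = Q := by
  have h : Q * (1 - P) = 0 :=
    tendsto_nhds_unique (hQ.mul_const _) (tendsto_cesaroMean_mul_one_sub hP)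
  rwa [mul_sub, mul_one, sub_eq_zero, eq_comm] at h

lemma isLeftRegular_one_sub_add_of_tendsto_cesaroMean
    (hP : Tendsto (fun m : ℕ => (m : ℝ)⁻¹ • P ^ m) atTop (𝓝 0))
    (hQ : Tendsto (cesaroMean P) atTop (𝓝 Q)) : IsLeftRegular (1 - P + Q) := by
  have hQP := mul_eq_self_of_tendsto_cesaroMean hP hQ
  have hQQ := mul_self_eq_of_tendsto_cesaroMean hQP hQ
  refine isLeftRegular_iff_right_eq_zero_of_mul.2 fun X hX => ?_
  have hQX : Q * X = 0 := by
    calc Q * X = Q * (1 - P + Q) * X := by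
          rw [mul_add, mul_sub, mul_one, hQP, hQQ, sub_self, zero_add]
      _ = 0 := by rw [mul_assoc, hX, mul_zero]
  have hPX : P * X = X := by
    rw [add_mul, sub_mul, one_mul, hQX, add_zero, sub_eq_zero] at hX
    exact hX.symm
  rw [← mul_eq_of_tendsto_cesaroMean hQ hPX, hQX]

end CesaroMean

lemma RowStochastic.tendsto_inv_smul_pow {n : ℕ} {P : Matrix (Fin n) (Fin n) ℝ}
    (hP : RowStochastic P) : Tendsto (fun m : ℕ => (m : ℝ)⁻¹ • P ^ m) atTop (𝓝 0) := by
  have hPm (m : ℕ) : P ^ m ∈ Matrix.rowStochastic ℝ (Fin n) :=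
    pow_mem (Matrix.mem_rowStochastic_iff_sum.2 hP) m
  refine tendsto_pi_nhds.2 fun i => tendsto_pi_nhds.2 fun j => ?_
  refine squeeze_zero (fun m => ?_) (fun m => ?_) tendsto_inv_atTop_nhds_zero_nat
  · exact mul_nonneg (by positivity) (Matrix.nonneg_of_mem_rowStochastic (hPm m))
  · exact mul_le_of_le_one_right (by positivity) (Matrix.le_one_of_mem_rowStochastic (hPm m))

/-- if `Pstar` is the Cesàro limit of the powers of a row-stochastic
matrix `P`, then the matrix `I - P + Pstar` is invertible. -/
theorem id_sub_add_cesaro_invertible {n : ℕ} (P : Matrix (Fin n) (Fin n) ℝ)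
    (hP : RowStochastic P) (Pstar : Matrix (Fin n) (Fin n) ℝ)
    (hPstar : Tendsto (fun m : ℕ => (m : ℝ)⁻¹ • ∑ k ∈ Finset.range m, P ^ k)
      atTop (𝓝 Pstar)) :
    IsUnit (1 - P + Pstar) :=
  IsArtinianRing.isUnit_iff_isLeftRegular.2 <|
    isLeftRegular_one_sub_add_of_tendsto_cesaroMean hP.tendsto_inv_smul_pow hPstar
end
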